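/- arXiv:1510.04528 — 7 statements merged into one kernel-verified Lean document; each statement's English description precedes it below -/
import Mathlib

section
/- Let X and Y be real Hilbert spaces, let A : X → X be a bounded skew-adjoint linear operator (A* = −A), and let C : X → Y be a bounded linear operator such that the system is exactly observable at time T > 0 with constant δ > 0. Then there exist M ≥ 0 and κ₀ > 0 such that for every κ ∈ (0, κ₀), the composition of semigroup operators satisfies ‖e^{(−A − κC*C)T} ∘ e^{(A − κC*C)T}‖ ≤ 1 − 2δκ + Mκ². -/
/-!
Write `B = A - κ C*C`. Since `A` is skew, `⟪B y, y⟫ = -κ ‖C y‖²`, so the energy identity reads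
`‖e^{TB} x‖² = ‖x‖² - 2κ ∫₀ᵀ ‖C e^{sB} x‖²`. Both `e^{sA}` and `e^{sB}` are contractions, so by
Duhamel's formula `‖e^{sA} - e^{sB}‖ ≤ κ s ‖C‖²`, and the observation integral along `e^{sB}` is
at least `(δ - O(κ)) ‖x‖²`. Hence `‖e^{TB}‖² ≤ 1 - 2δκ + O(κ²)`. Finally `-A - κ C*C = B*`, so
the composition is `(e^{TB})* e^{TB}`, whose norm is `‖e^{TB}‖²`.
-/
open MeasureTheory NormedSpace ContinuousLinearMap Set
open scoped RealInnerProductSpace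

theorem norm_exp_smul_sub_exp_smul_le {𝔸 : Type*} [NormedRing 𝔸] [NormedAlgebra ℝ 𝔸]
    [CompleteSpace 𝔸] {D E : 𝔸} (hD : ∀ s : ℝ, 0 ≤ s → ‖exp (s • D)‖ ≤ 1)
    (hE : ∀ s : ℝ, 0 ≤ s → ‖exp (s • E)‖ ≤ 1) {t : ℝ} (ht : 0 ≤ t) :
    ‖exp (t • D) - exp (t • E)‖ ≤ ‖D - E‖ * t := by
  -- `g` interpolates between `g 0 = exp (t • E)` and `g t = exp (t • D)`
  set g : ℝ → 𝔸 := fun s => exp ((t - s) • E) * exp (s • D)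
  have hg : ∀ s, HasDerivAt g (exp ((t - s) • E) * ((D - E) * exp (s • D))) s := by
    intro s
    have hE' : HasDerivAt (fun s : ℝ => exp ((t - s) • E)) (-(exp ((t - s) • E) * E)) s := by
      simpa [Function.comp_def] using
        (hasDerivAt_exp_smul_const E (t - s)).scomp s ((hasDerivAt_id s).const_sub t)
    refine (hE'.mul (hasDerivAt_exp_smul_const' D s)).congr_deriv ?_
    noncomm_ring
  have hbound : ∀ s ∈ Ico 0 t, ‖exp ((t - s) • E) * ((D - E) * exp (s • D))‖ ≤ ‖D - E‖ := by
    rintro s ⟨hs0, hst⟩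
    calc _ ≤ ‖exp ((t - s) • E)‖ * (‖D - E‖ * ‖exp (s • D)‖) :=
          (norm_mul_le _ _).trans (by gcongr; exact norm_mul_le _ _)
      _ ≤ 1 * (‖D - E‖ * 1) := by
          gcongr
          exacts [hE _ (by linarith), hD s hs0]
      _ = ‖D - E‖ := by ring
  simpa [g] using norm_image_sub_le_of_norm_deriv_le_segment' (f := g)
    (fun s _ => (hg s).hasDerivWithinAt) hbound t ⟨ht, le_rfl⟩

theorem hasDerivAt_exp_smul_apply {X : Type*} [NormedAddCommGroup X] [NormedSpace ℝ X]
    [CompleteSpace X] (B : X →L[ℝ] X) (x : X) (s : ℝ) :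
    HasDerivAt (fun s : ℝ => exp (s • B) x) (B (exp (s • B) x)) s := by
  simpa using (hasDerivAt_exp_smul_const' B s).clm_apply (hasDerivAt_const s x)

theorem continuous_exp_smul_apply {X : Type*} [NormedAddCommGroup X] [NormedSpace ℝ X]
    [CompleteSpace X] (B : X →L[ℝ] X) (x : X) : Continuous fun s : ℝ => exp (s • B) x :=
  continuous_iff_continuousAt.2 fun s => (hasDerivAt_exp_smul_apply B x s).continuousAt

theorem ContinuousLinearMap.sq_opNorm_le_of_sq_norm_apply_le {𝕜 E F : Type*}
    [NontriviallyNormedField 𝕜] [SeminormedAddCommGroup E] [SeminormedAddCommGroup F]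
    [NormedSpace 𝕜 E] [NormedSpace 𝕜 F] (S : E →L[𝕜] F) {c : ℝ} (hc : 0 ≤ c)
    (h : ∀ x, ‖S x‖ ^ 2 ≤ c * ‖x‖ ^ 2) : ‖S‖ ^ 2 ≤ c := by
  have hS : ‖S‖ ≤ √c := opNorm_le_bound _ (Real.sqrt_nonneg c) fun x => by
    rw [← Real.sqrt_sq (norm_nonneg (S x)), ← Real.sqrt_sq (norm_nonneg x), ← Real.sqrt_mul hc]
    exact Real.sqrt_le_sqrt (h x)
  calc ‖S‖ ^ 2 ≤ √c ^ 2 := by gcongr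
    _ = c := Real.sq_sqrt hc

theorem ContinuousLinearMap.sq_norm_apply_sub_sq_norm_apply_le {𝕜 E F : Type*}
    [NontriviallyNormedField 𝕜] [SeminormedAddCommGroup E] [SeminormedAddCommGroup F]
    [NormedSpace 𝕜 E] [NormedSpace 𝕜 F] (U V : E →L[𝕜] F) (x : E) :
    ‖U x‖ ^ 2 - ‖V x‖ ^ 2 ≤ ‖U - V‖ * (‖U‖ + ‖V‖) * ‖x‖ ^ 2 := by
  have hsub : ‖U x‖ - ‖V x‖ ≤ ‖U - V‖ * ‖x‖ :=
    (norm_sub_norm_le _ _).trans (by simpa using (U - V).le_opNorm x)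
  have hadd : ‖U x‖ + ‖V x‖ ≤ (‖U‖ + ‖V‖) * ‖x‖ := by
    rw [add_mul]; exact add_le_add (U.le_opNorm x) (V.le_opNorm x)
  calc ‖U x‖ ^ 2 - ‖V x‖ ^ 2 = (‖U x‖ - ‖V x‖) * (‖U x‖ + ‖V x‖) := by ring
    _ ≤ (‖U - V‖ * ‖x‖) * ((‖U‖ + ‖V‖) * ‖x‖) := by gcongr
    _ = ‖U - V‖ * (‖U‖ + ‖V‖) * ‖x‖ ^ 2 := by ring

section Hilbert

variable {X Y : Type*} [NormedAddCommGroup X] [InnerProductSpace ℝ X] [CompleteSpace X]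
  [NormedAddCommGroup Y] [InnerProductSpace ℝ Y] [CompleteSpace Y]

theorem sq_norm_exp_smul_apply (B : X →L[ℝ] X) (x : X) (t : ℝ) :
    ‖exp (t • B) x‖ ^ 2 =
      ‖x‖ ^ 2 + ∫ s in (0 : ℝ)..t, 2 * ⟪B (exp (s • B) x), exp (s • B) x⟫ := by
  have hderiv : ∀ s, HasDerivAt (fun s : ℝ => ‖exp (s • B) x‖ ^ 2)
      (2 * ⟪B (exp (s • B) x), exp (s • B) x⟫) s := fun s =>
    (hasDerivAt_exp_smul_apply B x s).norm_sq.congr_deriv (by rw [real_inner_comm])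
  have hcont : Continuous fun s : ℝ => 2 * ⟪B (exp (s • B) x), exp (s • B) x⟫ := by
    have := continuous_exp_smul_apply B x
    fun_prop
  rw [intervalIntegral.integral_eq_sub_of_hasDerivAt (fun s _ => hderiv s)
    (hcont.intervalIntegrable 0 t)]
  simp

theorem norm_exp_smul_le_one_of_dissipative {B : X →L[ℝ] X} (hB : ∀ y, ⟪B y, y⟫ ≤ 0) {t : ℝ}
    (ht : 0 ≤ t) : ‖exp (t • B)‖ ≤ 1 := by
  refine opNorm_le_bound _ zero_le_one fun x => ?_
  have hint : ∫ s in (0 : ℝ)..t, 2 * ⟪B (exp (s • B) x), exp (s • B) x⟫ ≤ 0 := by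
    rw [intervalIntegral.integral_of_le ht]
    exact integral_nonpos fun s => mul_nonpos_of_nonneg_of_nonpos zero_le_two (hB _)
  have hsq : ‖exp (t • B) x‖ ^ 2 ≤ ‖x‖ ^ 2 := by
    rw [sq_norm_exp_smul_apply]; linarith
  rw [one_mul]
  exact (pow_le_pow_iff_left₀ (norm_nonneg _) (norm_nonneg _) two_ne_zero).1 hsq

theorem inner_apply_self_eq_zero_of_adjoint_eq_neg {A : X →L[ℝ] X} (hA : adjoint A = -A)
    (y : X) : ⟪A y, y⟫ = 0 := by
  have h := adjoint_inner_right A y y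
  rw [hA, neg_apply, inner_neg_right, real_inner_comm] at h
  linarith

theorem inner_feedback_apply_self {A : X →L[ℝ] X} (hA : adjoint A = -A) (C : X →L[ℝ] Y)
    (κ : ℝ) (y : X) : ⟪(A - κ • (adjoint C ∘L C)) y, y⟫ = -(κ * ‖C y‖ ^ 2) := by
  rw [sub_apply, inner_sub_left, inner_apply_self_eq_zero_of_adjoint_eq_neg hA, smul_apply,
    real_inner_smul_left, comp_apply, adjoint_inner_left, real_inner_self_eq_norm_sq]
  ring

theorem sq_norm_exp_feedback_apply {A : X →L[ℝ] X} (hA : adjoint A = -A) (C : X →L[ℝ] Y)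
    (κ t : ℝ) (x : X) :
    ‖exp (t • (A - κ • (adjoint C ∘L C))) x‖ ^ 2 =
      ‖x‖ ^ 2 - 2 * κ * ∫ s in (0 : ℝ)..t, ‖C (exp (s • (A - κ • (adjoint C ∘L C))) x)‖ ^ 2 := by
  simp only [sq_norm_exp_smul_apply, inner_feedback_apply_self hA, mul_neg, ← mul_assoc,
    intervalIntegral.integral_neg, intervalIntegral.integral_const_mul]
  ring

theorem norm_exp_smul_le_one_of_adjoint_eq_neg {A : X →L[ℝ] X} (hA : adjoint A = -A) {t : ℝ}
    (ht : 0 ≤ t) : ‖exp (t • A)‖ ≤ 1 :=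
  norm_exp_smul_le_one_of_dissipative
    (fun y => (inner_apply_self_eq_zero_of_adjoint_eq_neg hA y).le) ht

theorem norm_exp_smul_feedback_le_one {A : X →L[ℝ] X} (hA : adjoint A = -A) (C : X →L[ℝ] Y)
    {κ t : ℝ} (hκ : 0 ≤ κ) (ht : 0 ≤ t) : ‖exp (t • (A - κ • (adjoint C ∘L C)))‖ ≤ 1 :=
  norm_exp_smul_le_one_of_dissipative
    (fun y => by rw [inner_feedback_apply_self hA, neg_nonpos]; positivity) ht

theorem sq_norm_observation_sub_le {A : X →L[ℝ] X} (hA : adjoint A = -A) (C : X →L[ℝ] Y)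
    {κ s : ℝ} (hκ : 0 ≤ κ) (hs : 0 ≤ s) (x : X) :
    ‖C (exp (s • A) x)‖ ^ 2 - ‖C (exp (s • (A - κ • (adjoint C ∘L C))) x)‖ ^ 2 ≤
      2 * κ * s * ‖C‖ ^ 4 * ‖x‖ ^ 2 := by
  set B := A - κ • (adjoint C ∘L C) with hB
  have hAB : ‖A - B‖ = κ * ‖C‖ ^ 2 := by
    rw [hB, sub_sub_cancel, norm_smul, norm_adjoint_comp_self, Real.norm_of_nonneg hκ, sq]
  have hAc : ‖exp (s • A)‖ ≤ 1 := norm_exp_smul_le_one_of_adjoint_eq_neg hA hs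
  have hBc : ‖exp (s • B)‖ ≤ 1 := norm_exp_smul_feedback_le_one hA C hκ hs
  have hdiff : ‖exp (s • A) - exp (s • B)‖ ≤ κ * ‖C‖ ^ 2 * s := by
    rw [← hAB]
    exact norm_exp_smul_sub_exp_smul_le (𝔸 := X →L[ℝ] X)
      (fun _ => norm_exp_smul_le_one_of_adjoint_eq_neg hA)
      (fun _ => norm_exp_smul_feedback_le_one hA C hκ) hs
  calc _ ≤ ‖C ∘L exp (s • A) - C ∘L exp (s • B)‖ *
        (‖C ∘L exp (s • A)‖ + ‖C ∘L exp (s • B)‖) * ‖x‖ ^ 2 :=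
        sq_norm_apply_sub_sq_norm_apply_le (C ∘L exp (s • A)) (C ∘L exp (s • B)) x
    _ ≤ (‖C‖ * (κ * ‖C‖ ^ 2 * s)) * (‖C‖ * 1 + ‖C‖ * 1) * ‖x‖ ^ 2 := by
        rw [← comp_sub]
        gcongr <;> refine (opNorm_comp_le _ _).trans ?_ <;> gcongr
    _ = 2 * κ * s * ‖C‖ ^ 4 * ‖x‖ ^ 2 := by ring

theorem adjoint_exp (S : X →L[ℝ] X) : adjoint (exp S) = exp (adjoint S) := by
  rw [← star_eq_adjoint, ← star_eq_adjoint, star_exp]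

theorem sq_norm_exp_feedback_apply_le {A : X →L[ℝ] X} (hA : adjoint A = -A) (C : X →L[ℝ] Y)
    {T δ : ℝ} (hT : 0 ≤ T)
    (hobs : ∀ x : X, δ * ‖x‖ ^ 2 ≤ ∫ s in (0:ℝ)..T, ‖C (exp (s • A) x)‖ ^ 2)
    {κ : ℝ} (hκ : 0 ≤ κ) (x : X) :
    ‖exp (T • (A - κ • (adjoint C ∘L C))) x‖ ^ 2 ≤
      (1 - 2 * δ * κ + 4 * T ^ 2 * ‖C‖ ^ 4 * κ ^ 2) * ‖x‖ ^ 2 := by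
  set B := A - κ • (adjoint C ∘L C)
  have hint : δ * ‖x‖ ^ 2 - T * (2 * κ * T * ‖C‖ ^ 4 * ‖x‖ ^ 2) ≤
      ∫ s in (0:ℝ)..T, ‖C (exp (s • B) x)‖ ^ 2 := by
    have hcA : Continuous fun s : ℝ => ‖C (exp (s • A) x)‖ ^ 2 := by
      have := continuous_exp_smul_apply A x; fun_prop
    have hcB : Continuous fun s : ℝ => ‖C (exp (s • B) x)‖ ^ 2 := by
      have := continuous_exp_smul_apply B x; fun_prop
    calc _ ≤ (∫ s in (0:ℝ)..T, ‖C (exp (s • A) x)‖ ^ 2) -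
          ∫ _ in (0:ℝ)..T, 2 * κ * T * ‖C‖ ^ 4 * ‖x‖ ^ 2 := by
          rw [intervalIntegral.integral_const, smul_eq_mul, sub_zero]; linarith [hobs x]
      _ = ∫ s in (0:ℝ)..T, (‖C (exp (s • A) x)‖ ^ 2 - 2 * κ * T * ‖C‖ ^ 4 * ‖x‖ ^ 2) :=
          (intervalIntegral.integral_sub (hcA.intervalIntegrable 0 T) intervalIntegrable_const).symm
      _ ≤ _ := intervalIntegral.integral_mono_on hT
          ((hcA.sub continuous_const).intervalIntegrable 0 T) (hcB.intervalIntegrable 0 T)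
          fun s hs => by
            have hTs : 2 * κ * s * ‖C‖ ^ 4 * ‖x‖ ^ 2 ≤ 2 * κ * T * ‖C‖ ^ 4 * ‖x‖ ^ 2 := by
              gcongr; exact hs.2
            linarith [sq_norm_observation_sub_le hA C hκ hs.1 x]
  rw [sq_norm_exp_feedback_apply hA]
  nlinarith [mul_le_mul_of_nonneg_left hint (by positivity : (0:ℝ) ≤ 2 * κ)]

end Hilbert

/-- For a bounded skew-adjoint `A` and an exactly observable bounded output operator `C`,
the composition of the backward and forward colocated-feedback semigroups at time `T`
has norm at most `1 - 2δκ + Mκ²` for all small enough gains `κ`. -/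
theorem bfn_contraction_skew
    {X Y : Type*} [NormedAddCommGroup X] [InnerProductSpace ℝ X] [CompleteSpace X]
    [NormedAddCommGroup Y] [InnerProductSpace ℝ Y] [CompleteSpace Y]
    (A : X →L[ℝ] X) (hA : ContinuousLinearMap.adjoint A = -A)
    (C : X →L[ℝ] Y) (T δ : ℝ) (hT : 0 < T) (hδ : 0 < δ)
    (hobs : ∀ x : X, δ * ‖x‖ ^ 2 ≤ ∫ s in (0:ℝ)..T, ‖C (exp (s • A) x)‖ ^ 2) :
    ∃ M : ℝ, 0 ≤ M ∧ ∃ κ₀ : ℝ, 0 < κ₀ ∧ ∀ κ ∈ Ioo 0 κ₀,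
      ‖(exp (T • (-A - κ • ((ContinuousLinearMap.adjoint C).comp C)))).comp
          (exp (T • (A - κ • ((ContinuousLinearMap.adjoint C).comp C))))‖
        ≤ 1 - 2 * δ * κ + M * κ ^ 2 := by
  refine ⟨4 * T ^ 2 * ‖C‖ ^ 4, by positivity, 1 / (2 * δ), by positivity, ?_⟩
  rintro κ ⟨hκ0, hκ⟩
  have hadj : T • (-A - κ • (adjoint C ∘L C)) = adjoint (T • (A - κ • (adjoint C ∘L C))) := by
    simp [hA, adjoint_comp]
  have hc : 0 ≤ 1 - 2 * δ * κ + 4 * T ^ 2 * ‖C‖ ^ 4 * κ ^ 2 := by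
    rw [lt_div_iff₀ (by positivity)] at hκ
    have : 0 ≤ 4 * T ^ 2 * ‖C‖ ^ 4 * κ ^ 2 := by positivity
    linarith
  rw [hadj, ← adjoint_exp, norm_adjoint_comp_self, ← sq]
  exact sq_opNorm_le_of_sq_norm_apply_le _ hc
    (sq_norm_exp_feedback_apply_le hA C hT.le hobs hκ0.le)
end

section
/- Let X be a real Banach space and let A, B : X → X be bounded linear operators. Then for every t ≥ 0, the semigroup perturbation (Duhamel) formula holds: e^{t(A+B)} = e^{tA} + ∫₀ᵗ e^{(t−s)A} ∘ B ∘ e^{s(A+B)} ds, where the integral is a Bochner integral in the space of bounded operators on X. -/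
/-!
Differentiate `s ↦ e^{(t-s)a} e^{sb}`: since `a` commutes with `e^{(t-s)a}`, the derivative is
`e^{(t-s)a} (b - a) e^{sb}`. Integrating from `0` to `t` gives
`e^{tb} - e^{ta} = ∫₀ᵗ e^{(t-s)a} (b - a) e^{sb} ds` in any real Banach algebra; take `a = A`,
`b = A + B` in the algebra of bounded operators.
-/

open NormedSpace intervalIntegral

section BanachAlgebra

variable {𝔸 : Type*} [NormedRing 𝔸] [NormedAlgebra ℝ 𝔸] [CompleteSpace 𝔸]

theorem hasDerivAt_exp_sub_smul (a : 𝔸) (t s : ℝ) :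
    HasDerivAt (fun s : ℝ => exp ((t - s) • a)) (-(a * exp ((t - s) • a))) s := by
  have hsub : HasDerivAt (fun x : ℝ => t - x) (-1) s := by
    simpa using (hasDerivAt_id s).const_sub t
  have h := (hasDerivAt_exp_smul_const' (𝕂 := ℝ) a (t - s)).scomp s hsub
  simp only [neg_smul, one_smul] at h
  exact h

theorem hasDerivAt_exp_sub_smul_mul_exp_smul (a b : 𝔸) (t s : ℝ) :
    HasDerivAt (fun s : ℝ => exp ((t - s) • a) * exp (s • b))
      (exp ((t - s) • a) * (b - a) * exp (s • b)) s := by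
  have hcomm : Commute a (exp ((t - s) • a)) := ((Commute.refl a).smul_right (t - s)).exp_right
  refine ((hasDerivAt_exp_sub_smul a t s).mul
    (hasDerivAt_exp_smul_const' (𝕂 := ℝ) b s)).congr_deriv ?_
  rw [hcomm.eq]
  noncomm_ring

theorem continuous_exp_sub_smul_mul_mul_exp_smul (a c b : 𝔸) (t : ℝ) :
    Continuous fun s : ℝ => exp ((t - s) • a) * c * exp (s • b) :=
  (((differentiable_exp_smul_const ℝ a).continuous.comp (continuous_const.sub continuous_id)).mul
    continuous_const).mul (differentiable_exp_smul_const ℝ b).continuous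

theorem exp_smul_eq_exp_smul_add_integral (a b : 𝔸) (t : ℝ) :
    exp (t • b) = exp (t • a) + ∫ s in (0 : ℝ)..t, exp ((t - s) • a) * (b - a) * exp (s • b) := by
  rw [integral_eq_sub_of_hasDerivAt (fun s _ => hasDerivAt_exp_sub_smul_mul_exp_smul a b t s)
    ((continuous_exp_sub_smul_mul_mul_exp_smul a (b - a) b t).intervalIntegrable 0 t)]
  simp

end BanachAlgebra

/-- **Semigroup perturbation (Duhamel) formula** for bounded generators on a Banach space:
`e^{t(A+B)} = e^{tA} + ∫₀ᵗ e^{(t−s)A} B e^{s(A+B)} ds`. -/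
theorem semigroup_perturbation_formula
    {X : Type*} [NormedAddCommGroup X] [NormedSpace ℝ X] [CompleteSpace X]
    (A B : X →L[ℝ] X) :
    ∀ t : ℝ, 0 ≤ t →
      NormedSpace.exp (t • (A + B)) =
        NormedSpace.exp (t • A) +
          ∫ s in (0:ℝ)..t, ((NormedSpace.exp ((t - s) • A)).comp B).comp (NormedSpace.exp (s • (A + B))) := by
  intro t _
  have h := exp_smul_eq_exp_smul_add_integral A (A + B) t
  rwa [add_sub_cancel_left] at h
end

section
/- Let X and Y be real Hilbert spaces, A : X → X and C : X → Y bounded linear operators, T > 0, f : [0,T] → X continuous, and y ∈ L²(0,T;Y). Assume the system is exactly observable at time T with constant δ > 0. Then the cost function J(x) := ½ ∫₀ᵀ ‖y(s) − C z[x](s)‖² ds, where z[x](t) := e^{tA} x + ∫₀ᵗ e^{(t−s)A} f(s) ds, has a unique minimizer x° ∈ X, i.e. there exists a unique x° with J(x°) ≤ J(x) for all x ∈ X. -/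
open MeasureTheory NormedSpace ContinuousLinearMap Set

/-- The mild solution `z[x](t) = e^{tA} x + ∫₀ᵗ e^{(t−s)A} f(s) ds` of
`ż = Az + f`, `z(0) = x`, for a bounded generator `A`. -/
noncomputable def mildSol {X : Type*} [NormedAddCommGroup X] [InnerProductSpace ℝ X]
    [CompleteSpace X] (A : X →L[ℝ] X) (f : ℝ → X) (x : X) (t : ℝ) : X :=
  exp (t • A) x + ∫ s in (0:ℝ)..t, exp ((t - s) • A) (f s)

/-- The output-error cost `J(x) = ½ ∫₀ᵀ ‖y(s) − C z[x](s)‖² ds`. -/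
noncomputable def outputCost {X Y : Type*} [NormedAddCommGroup X] [InnerProductSpace ℝ X]
    [CompleteSpace X] [NormedAddCommGroup Y] [InnerProductSpace ℝ Y] [CompleteSpace Y]
    (A : X →L[ℝ] X) (C : X →L[ℝ] Y) (f : ℝ → X) (y : ℝ → Y) (T : ℝ) (x : X) : ℝ :=
  (1 / 2) * ∫ s in (0:ℝ)..T, ‖y s - C (mildSol A f x s)‖ ^ 2


/-!
Write the mild solution as the free response `e^{tA} x` plus the response `z[0]` to the load.
Then `J(x) = ½ ‖g - O x‖²` in `L²(0, T; Y)`, with `O x = C e^{·A} x` and `g = y - C z[0]`.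
Exact observability says that `O` is bounded below, so `O` is injective and has closed range;
the minimizers of `J` are the preimages of the orthogonal projection of `g` onto that range.
-/

theorem ContinuousLinearMap.antilipschitz_of_mul_sq_le {E F : Type*} [NormedAddCommGroup E]
    [NormedSpace ℝ E] [NormedAddCommGroup F] [NormedSpace ℝ F] (O : E →L[ℝ] F) {δ : ℝ}
    (hδ : 0 < δ) (h : ∀ x, δ * ‖x‖ ^ 2 ≤ ‖O x‖ ^ 2) :
    AntilipschitzWith (Real.toNNReal (√δ)⁻¹) O := by
  refine O.antilipschitz_of_bound fun x => ?_
  have hx : √δ * ‖x‖ ≤ ‖O x‖ := by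
    rw [← pow_le_pow_iff_left₀ (by positivity) (norm_nonneg _) two_ne_zero, mul_pow,
      Real.sq_sqrt hδ.le]
    exact h x
  rwa [Real.coe_toNNReal _ (by positivity), ← div_eq_inv_mul, le_div_iff₀' (by positivity)]

open RealInnerProductSpace in
theorem existsUnique_norm_sub_apply_le {E F : Type*} [NormedAddCommGroup E]
    [InnerProductSpace ℝ E] [CompleteSpace E] [NormedAddCommGroup F] [InnerProductSpace ℝ F]
    {O : E →L[ℝ] F} {K : NNReal} (hO : AntilipschitzWith K O) (g : F) :
    ∃! xo : E, ∀ x, ‖g - O xo‖ ≤ ‖g - O x‖ := by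
  set R := (O : E →ₗ[ℝ] F).range
  have hR : IsComplete (R : Set F) := by
    simpa [R, LinearMap.coe_range] using hO.isComplete_range O.uniformContinuous
  have hbdd : BddBelow (range fun w : R => ‖g - w‖) := ⟨0, by rintro _ ⟨w, rfl⟩; positivity⟩
  have hproj : ∀ xo, (∀ x, ‖g - O xo‖ ≤ ‖g - O x‖) ↔ ‖g - O xo‖ = ⨅ w : R, ‖g - w‖ := by
    refine fun xo => ⟨fun h => ?_, fun h x => h ▸ ciInf_le hbdd ⟨O x, x, rfl⟩⟩
    exact le_antisymm (le_ciInf fun ⟨_, x, hx⟩ => hx ▸ h x) (ciInf_le hbdd ⟨O xo, xo, rfl⟩)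
  have horth : ∀ xo, (∀ x, ‖g - O xo‖ ≤ ‖g - O x‖) → ∀ x, ⟪g - O xo, O x⟫ = 0 := fun xo h x =>
    (R.norm_eq_iInf_iff_real_inner_eq_zero ⟨xo, rfl⟩).1 ((hproj xo).1 h) (O x) ⟨x, rfl⟩
  obtain ⟨_, ⟨xo, rfl⟩, hxo⟩ := R.exists_norm_eq_iInf_of_complete_subspace hR g
  have hmin : ∀ x, ‖g - O xo‖ ≤ ‖g - O x‖ := (hproj xo).2 hxo
  refine ⟨xo, hmin, fun x hx => hO.injective <| sub_eq_zero.1 <|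
    (inner_self_eq_zero (𝕜 := ℝ)).1 ?_⟩
  calc ⟪O x - O xo, O x - O xo⟫ = ⟪g - O xo, O (x - xo)⟫ - ⟪g - O x, O (x - xo)⟫ := by
        rw [← inner_sub_left, sub_sub_sub_cancel_left, map_sub]
    _ = 0 := by rw [horth xo hmin, horth x hx, sub_zero]

section Lp

variable {α : Type*} [MeasurableSpace α] {μ : Measure α} {E X : Type*} [NormedAddCommGroup E]
  [NormedAddCommGroup X] [NormedSpace ℝ X]

theorem MeasureTheory.MemLp.norm_toLp_sq [InnerProductSpace ℝ E] {F : α → E} (hF : MemLp F 2 μ) :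
    ‖hF.toLp F‖ ^ 2 = ∫ a, ‖F a‖ ^ 2 ∂μ := by
  rw [← real_inner_self_eq_norm_sq, L2.inner_def]
  exact integral_congr_ae (hF.coeFn_toLp.mono fun a ha => by
    simp only [ha, real_inner_self_eq_norm_sq])

variable [IsFiniteMeasure μ] [NormedSpace ℝ E]

theorem memLp_apply_of_ae_norm_le {O : α → X →L[ℝ] E} (hO : AEStronglyMeasurable O μ) {M : ℝ}
    (hM : ∀ᵐ s ∂μ, ‖O s‖ ≤ M) (p : ENNReal) (x : X) : MemLp (fun s => O s x) p μ :=
  MemLp.of_bound (hO.apply_continuousLinearMap x) (M * ‖x‖)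
    (hM.mono fun s hs => (O s).le_of_opNorm_le hs x)

noncomputable def applyLp (O : α → X →L[ℝ] E) (hO : AEStronglyMeasurable O μ) {M : ℝ}
    (hM : ∀ᵐ s ∂μ, ‖O s‖ ≤ M) (p : ENNReal) [Fact (1 ≤ p)] : X →L[ℝ] Lp E p μ :=
  LinearMap.mkContinuousOfExistsBound
    { toFun := fun x => (memLp_apply_of_ae_norm_le hO hM p x).toLp _
      map_add' := fun x x' => by
        simp_rw [map_add]
        exact MemLp.toLp_add _ _
      map_smul' := fun c x => by
        simp_rw [map_smul]
        exact MemLp.toLp_const_smul _ _ }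
    ⟨(measureUnivNNReal μ) ^ p.toReal⁻¹ * max M 0, fun x => by
      rw [mul_assoc]
      refine Lp.norm_le_of_ae_bound (by positivity) ?_
      filter_upwards [(memLp_apply_of_ae_norm_le hO hM p x).coeFn_toLp, hM] with s hs hMs
      rw [LinearMap.coe_mk, AddHom.coe_mk, hs]
      exact (O s).le_of_opNorm_le (hMs.trans (le_max_left M 0)) x⟩

theorem applyLp_apply (O : α → X →L[ℝ] E) (hO : AEStronglyMeasurable O μ) {M : ℝ}
    (hM : ∀ᵐ s ∂μ, ‖O s‖ ≤ M) (p : ENNReal) [Fact (1 ≤ p)] (x : X) :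
    applyLp O hO hM p x = (memLp_apply_of_ae_norm_le hO hM p x).toLp _ :=
  rfl

end Lp

theorem continuous_exp_smul {𝕂 𝔸 : Type*} [RCLike 𝕂] [NormedRing 𝔸] [NormedAlgebra 𝕂 𝔸]
    [CompleteSpace 𝔸] (a : 𝔸) : Continuous fun t : 𝕂 => exp (t • a) :=
  continuous_iff_continuousAt.2 fun t => (hasDerivAt_exp_smul_const a t).continuousAt

section RestrictIoc

variable {E : Type*} [NormedAddCommGroup E] {a b : ℝ} {g : ℝ → E}

theorem ContinuousOn.exists_ae_restrict_Ioc_norm_le (hg : ContinuousOn g (Icc a b)) :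
    ∃ M, ∀ᵐ s ∂volume.restrict (Ioc a b), ‖g s‖ ≤ M := by
  obtain ⟨M, hM⟩ := isCompact_Icc.exists_bound_of_continuousOn hg
  exact ⟨M, (ae_restrict_iff' measurableSet_Ioc).2 <|
    ae_of_all _ fun s hs => hM s (Ioc_subset_Icc_self hs)⟩

theorem ContinuousOn.aestronglyMeasurable_restrict_Ioc (hg : ContinuousOn g (Icc a b)) :
    AEStronglyMeasurable g (volume.restrict (Ioc a b)) :=
  (hg.aestronglyMeasurable measurableSet_Icc).mono_measure
    (Measure.restrict_mono Ioc_subset_Icc_self le_rfl)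

theorem ContinuousOn.memLp_restrict_Ioc (hg : ContinuousOn g (Icc a b)) (p : ENNReal) :
    MemLp g p (volume.restrict (Ioc a b)) :=
  let ⟨M, hM⟩ := hg.exists_ae_restrict_Ioc_norm_le
  MemLp.of_bound hg.aestronglyMeasurable_restrict_Ioc M hM

end RestrictIoc

section MildSolution

variable {X : Type*} [NormedAddCommGroup X]

theorem intervalIntegral_exp_sub_smul_apply [NormedSpace ℝ X] [CompleteSpace X] (A : X →L[ℝ] X)
    {f : ℝ → X} {t : ℝ} (hf : IntervalIntegrable (fun s => exp ((-s) • A) (f s)) volume 0 t) :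
    ∫ s in (0:ℝ)..t, exp ((t - s) • A) (f s) =
      exp (t • A) (∫ s in (0:ℝ)..t, exp ((-s) • A) (f s)) := by
  have hsplit (s : ℝ) : exp ((t - s) • A) = exp (t • A) * exp ((-s) • A) := by
    -- `exp_add_of_commute` is stated for `ℚ`-algebras
    let := NormedAlgebra.restrictScalars ℚ ℝ (X →L[ℝ] X)
    rw [sub_eq_add_neg, add_smul,
      exp_add_of_commute ((Commute.refl A).smul_left t |>.smul_right _)]
  simp_rw [hsplit, mul_apply_eq_comp]
  exact (exp (t • A)).intervalIntegral_comp_comm hf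

variable [InnerProductSpace ℝ X] [CompleteSpace X]

theorem mildSol_eq_exp_smul_add (A : X →L[ℝ] X) (f : ℝ → X) (x : X) (t : ℝ) :
    mildSol A f x t = exp (t • A) x + mildSol A f 0 t := by
  simp [mildSol]

theorem continuousOn_mildSol (A : X →L[ℝ] X) {f : ℝ → X} {T : ℝ} (hT : 0 ≤ T)
    (hf : ContinuousOn f (Icc 0 T)) (x : X) : ContinuousOn (mildSol A f x) (Icc 0 T) := by
  have hexp := continuous_exp_smul (𝕂 := ℝ) A
  set ψ : ℝ → X := fun s => exp ((-s) • A) (f s)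
  have hψ : ContinuousOn ψ (Icc 0 T) :=
    (hexp.comp continuous_neg).continuousOn.clm_apply hf
  have hprim : ContinuousOn (fun t => ∫ s in (0:ℝ)..t, ψ s) (Icc 0 T) := by
    have h := intervalIntegral.continuousOn_primitive_interval (μ := volume) (a := 0) (b := T)
      (f := ψ) (by rw [uIcc_of_le hT]; exact hψ.integrableOn_compact isCompact_Icc)
    rwa [uIcc_of_le hT] at h
  refine ((hexp.clm_apply (continuous_const (y := x))).continuousOn.add
    (hexp.continuousOn.clm_apply hprim)).congr fun t ht => ?_
  have hψt : IntervalIntegrable ψ volume 0 t :=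
    (hψ.mono (Icc_subset_Icc le_rfl ht.2)).intervalIntegrable_of_Icc ht.1
  simp only [mildSol, intervalIntegral_exp_sub_smul_apply A hψt, Pi.add_apply, ψ]

end MildSolution

noncomputable def observationL2 {X Y : Type*} [NormedAddCommGroup X] [NormedSpace ℝ X]
    [CompleteSpace X] [NormedAddCommGroup Y] [NormedSpace ℝ Y] (A : X →L[ℝ] X) (C : X →L[ℝ] Y)
    (T : ℝ) : X →L[ℝ] Lp Y 2 (volume.restrict (Ioc 0 T)) :=
  have hO : Continuous fun s : ℝ => C ∘L exp (s • A) :=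
    continuous_const.clm_comp (continuous_exp_smul A)
  applyLp _ hO.aestronglyMeasurable hO.continuousOn.exists_ae_restrict_Ioc_norm_le.choose_spec 2

theorem observationL2_norm_sq {X Y : Type*} [NormedAddCommGroup X] [NormedSpace ℝ X]
    [CompleteSpace X] [NormedAddCommGroup Y] [InnerProductSpace ℝ Y] (A : X →L[ℝ] X)
    (C : X →L[ℝ] Y) {T : ℝ} (hT : 0 ≤ T) (x : X) :
    ‖observationL2 A C T x‖ ^ 2 = ∫ s in (0:ℝ)..T, ‖C (exp (s • A) x)‖ ^ 2 := by
  rw [observationL2, applyLp_apply, MemLp.norm_toLp_sq, intervalIntegral.integral_of_le hT]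
  rfl

theorem exists_outputCost_eq_norm_sub_sq {X Y : Type*} [NormedAddCommGroup X]
    [InnerProductSpace ℝ X] [CompleteSpace X] [NormedAddCommGroup Y] [InnerProductSpace ℝ Y]
    [CompleteSpace Y] (A : X →L[ℝ] X) (C : X →L[ℝ] Y) {f : ℝ → X} {y : ℝ → Y}
    {T : ℝ} (hT : 0 ≤ T) (hf : ContinuousOn f (Icc 0 T))
    (hy : MemLp y 2 (volume.restrict (Ioc 0 T))) :
    ∃ g : Lp Y 2 (volume.restrict (Ioc 0 T)),
      ∀ x, outputCost A C f y T x = ‖g - observationL2 A C T x‖ ^ 2 / 2 := by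
  have hforced : MemLp (fun s => C (mildSol A f 0 s)) 2 (volume.restrict (Ioc 0 T)) :=
    (C.continuous.comp_continuousOn (continuousOn_mildSol A hT hf 0)).memLp_restrict_Ioc 2
  refine ⟨(hy.sub hforced).toLp _, fun x => ?_⟩
  rw [observationL2, applyLp_apply, ← MemLp.toLp_sub, MemLp.norm_toLp_sq, outputCost,
    intervalIntegral.integral_of_le hT, one_div, div_eq_inv_mul]
  congr 1
  refine integral_congr_ae (ae_of_all _ fun s => ?_)
  simp only [mildSol_eq_exp_smul_add A f x, map_add, Pi.sub_apply, comp_apply]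
  congr 2
  abel

/-- Under exact observability, the output-error cost `J` has a unique minimizer. -/
theorem outputCost_exists_unique_minimizer
    {X Y : Type*} [NormedAddCommGroup X] [InnerProductSpace ℝ X] [CompleteSpace X]
    [NormedAddCommGroup Y] [InnerProductSpace ℝ Y] [CompleteSpace Y]
    (A : X →L[ℝ] X) (C : X →L[ℝ] Y) (T δ : ℝ) (hT : 0 < T) (hδ : 0 < δ)
    (f : ℝ → X) (hf : ContinuousOn f (Icc 0 T))
    (y : ℝ → Y) (hy : MemLp y 2 (volume.restrict (Ioc 0 T)))
    (hobs : ∀ x : X, δ * ‖x‖ ^ 2 ≤ ∫ s in (0:ℝ)..T, ‖C (exp (s • A) x)‖ ^ 2) :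
    ∃! xo : X, ∀ x : X, outputCost A C f y T xo ≤ outputCost A C f y T x := by
  obtain ⟨g, hJ⟩ := exists_outputCost_eq_norm_sub_sq A C hT.le hf hy
  have hbelow := (observationL2 A C T).antilipschitz_of_mul_sq_le hδ fun x =>
    (observationL2_norm_sq A C hT.le x).symm ▸ hobs x
  simp_rw [hJ, div_le_div_iff_of_pos_right (two_pos : (0 : ℝ) < 2),
    pow_le_pow_iff_left₀ (norm_nonneg _) (norm_nonneg _) two_ne_zero]
  exact existsUnique_norm_sub_apply_le hbelow g
end

section
/- Let X and Y be real Hilbert spaces, A : X → X a bounded skew-adjoint operator (A* = −A), C : X → Y a bounded linear operator, κ > 0, T > 0, and χ ∈ L²(0,T;Y). Define ε(t) := −κ ∫₀ᵗ e^{(A − κC*C)(t−s)} C* χ(s) ds. Then for all t ∈ [0,T], ‖ε(t)‖ ≤ κ ‖C‖ √t ‖χ‖_{L²(0,T;Y)}. -/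
/-!
Since `A` is skew-adjoint, `⟪(A - κ C*C) x, x⟫ = -κ ‖C x‖² ≤ 0`, so `u ↦ ‖e^{u(A - κC*C)} x‖²`
is antitone and the semigroup is a contraction. Hence `‖ε(t)‖ ≤ κ ‖C*‖ ∫₀ᵗ ‖χ‖`, and the
Cauchy–Schwarz inequality on `(0, t]` bounds `∫₀ᵗ ‖χ‖` by `√t ‖χ‖_{L²(0,T)}`.
-/

open MeasureTheory NormedSpace ContinuousLinearMap Set
open scoped InnerProductSpace

theorem integral_norm_le_sqrt_measureReal_univ_mul_sqrt_integral_norm_sq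
    {α E : Type*} [MeasurableSpace α] [NormedAddCommGroup E] {μ : Measure α} [IsFiniteMeasure μ]
    {f : α → E} (hf : MemLp f 2 μ) :
    ∫ a, ‖f a‖ ∂μ ≤ √(μ.real univ) * √(∫ a, ‖f a‖ ^ 2 ∂μ) := by
  have h2 : ENNReal.ofReal 2 = 2 := by norm_num
  have hone : MemLp (fun _ : α => (1 : ℝ)) (ENNReal.ofReal 2) μ := h2 ▸ memLp_const 1
  have := integral_mul_norm_le_Lp_mul_Lq Real.HolderConjugate.two_two (h2 ▸ hf.norm) hone
  simpa only [norm_norm, norm_one, mul_one, one_pow, integral_const, smul_eq_mul,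
    Real.rpow_two, ← Real.sqrt_eq_rpow, mul_comm (√(μ.real univ))] using this

theorem intervalIntegral_norm_le_sqrt_mul_sqrt_integral_norm_sq
    {E : Type*} [NormedAddCommGroup E] {f : ℝ → E} {t T : ℝ} (ht : 0 ≤ t) (htT : t ≤ T)
    (hf : MemLp f 2 (volume.restrict (Ioc 0 T))) :
    ∫ s in 0..t, ‖f s‖ ≤ √t * √(∫ s in 0..T, ‖f s‖ ^ 2) := by
  have hsub : Ioc 0 t ⊆ Ioc 0 T := Ioc_subset_Ioc_right htT
  have hft : MemLp f 2 (volume.restrict (Ioc 0 t)) :=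
    hf.mono_measure (Measure.restrict_mono hsub le_rfl)
  have hsq : IntegrableOn (fun s => ‖f s‖ ^ 2) (Ioc 0 T) := hf.integrable_norm_pow two_ne_zero
  rw [intervalIntegral.integral_of_le ht, intervalIntegral.integral_of_le (ht.trans htT)]
  calc ∫ s in Ioc 0 t, ‖f s‖
      ≤ √t * √(∫ s in Ioc 0 t, ‖f s‖ ^ 2) := by
        simpa [Real.volume_real_Ioc_of_le ht] using
          integral_norm_le_sqrt_measureReal_univ_mul_sqrt_integral_norm_sq hft
    _ ≤ √t * √(∫ s in Ioc 0 T, ‖f s‖ ^ 2) := by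
        gcongr
        exact .of_forall fun s => by positivity

section Dissipative

variable {X : Type*} [NormedAddCommGroup X] [InnerProductSpace ℝ X] [CompleteSpace X]

theorem norm_exp_smul_apply_le_of_inner_map_self_nonpos {B : X →L[ℝ] X}
    (hB : ∀ x, ⟪B x, x⟫_ℝ ≤ 0) {t : ℝ} (ht : 0 ≤ t) (x : X) :
    ‖exp (t • B) x‖ ≤ ‖x‖ := by
  set y : ℝ → X := fun u => exp (u • B) x
  have hy : ∀ u, HasDerivAt y (B (y u)) u := fun u => by
    simpa only [y, mul_apply_eq_comp, map_zero, add_zero] using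
      (hasDerivAt_exp_smul_const' B u).clm_apply (hasDerivAt_const u x)
  have hanti : Antitone fun u => ‖y u‖ ^ 2 :=
    antitone_of_deriv_nonpos (fun u => (hy u).norm_sq.differentiableAt) fun u => by
      rw [(hy u).norm_sq.deriv, real_inner_comm]
      linarith [hB (y u)]
  have h := hanti ht
  simp only [y, zero_smul, exp_zero, one_apply_eq_self] at h
  exact (pow_le_pow_iff_left₀ (norm_nonneg _) (norm_nonneg _) two_ne_zero).mp h

theorem inner_map_self_eq_zero_of_adjoint_eq_neg {A : X →L[ℝ] X} (hA : adjoint A = -A) (x : X) :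
    ⟪A x, x⟫_ℝ = 0 := by
  have h := adjoint_inner_left A x x
  rw [hA, neg_apply, inner_neg_left] at h
  linarith [real_inner_comm x (A x)]

theorem norm_integral_exp_smul_apply_le {E : Type*} [NormedAddCommGroup E] [NormedSpace ℝ E]
    {B : X →L[ℝ] X} (hB : ∀ x, ⟪B x, x⟫_ℝ ≤ 0) (L : E →L[ℝ] X) {f : ℝ → E} {t : ℝ}
    (ht : 0 ≤ t) (hf : IntegrableOn f (Ioc 0 t)) :
    ‖∫ s in 0..t, exp ((t - s) • B) (L (f s))‖ ≤ ‖L‖ * ∫ s in 0..t, ‖f s‖ := by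
  rw [← intervalIntegral.integral_const_mul]
  refine intervalIntegral.norm_integral_le_of_norm_le ht (.of_forall fun s hs => ?_)
    ((intervalIntegrable_iff_integrableOn_Ioc_of_le ht).mpr (hf.norm.const_mul ‖L‖))
  calc ‖exp ((t - s) • B) (L (f s))‖ ≤ ‖L (f s)‖ :=
        norm_exp_smul_apply_le_of_inner_map_self_nonpos hB (sub_nonneg.mpr hs.2) _
    _ ≤ ‖L‖ * ‖f s‖ := L.le_opNorm _

variable {Y : Type*} [NormedAddCommGroup Y] [InnerProductSpace ℝ Y] [CompleteSpace Y]

theorem inner_sub_smul_adjoint_comp_self_apply_self_nonpos {A : X →L[ℝ] X}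
    (hA : adjoint A = -A) (C : X →L[ℝ] Y) {κ : ℝ} (hκ : 0 ≤ κ) (x : X) :
    ⟪(A - κ • (adjoint C ∘L C)) x, x⟫_ℝ ≤ 0 := by
  have hC : ⟪(adjoint C ∘L C) x, x⟫_ℝ = ‖C x‖ ^ 2 :=
    (apply_norm_sq_eq_inner_adjoint_left C x).symm
  rw [sub_apply, smul_apply, inner_sub_left, real_inner_smul_left, hC,
    inner_map_self_eq_zero_of_adjoint_eq_neg hA]
  nlinarith [sq_nonneg ‖C x‖]

end Dissipative

theorem noise_error_first_order_bound_general
    {X Y : Type*} [NormedAddCommGroup X] [InnerProductSpace ℝ X] [CompleteSpace X]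
    [NormedAddCommGroup Y] [InnerProductSpace ℝ Y] [CompleteSpace Y]
    (A : X →L[ℝ] X) (hA : ContinuousLinearMap.adjoint A = -A)
    (C : X →L[ℝ] Y) (κ T : ℝ) (hκ : 0 < κ)
    (χ : ℝ → Y) (hχ : MemLp χ 2 (volume.restrict (Ioc 0 T)))
    (ε : ℝ → X)
    (hε : ∀ t : ℝ, ε t = -(κ • ∫ s in (0:ℝ)..t,
      NormedSpace.exp ((t - s) • (A - κ • ((ContinuousLinearMap.adjoint C).comp C)))
        (ContinuousLinearMap.adjoint C (χ s)))) :
    ∀ t ∈ Icc (0:ℝ) T,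
      ‖ε t‖ ≤ κ * ‖C‖ * Real.sqrt t * Real.sqrt (∫ s in (0:ℝ)..T, ‖χ s‖ ^ 2) := by
  rintro t ⟨ht, htT⟩
  have hχt : IntegrableOn χ (Ioc 0 t) :=
    (hχ.mono_measure (Measure.restrict_mono (Ioc_subset_Ioc_right htT) le_rfl)).integrable
      one_le_two
  rw [hε t, norm_neg, norm_smul, Real.norm_of_nonneg hκ.le, mul_assoc, mul_assoc]
  gcongr
  calc _ ≤ ‖adjoint C‖ * ∫ s in 0..t, ‖χ s‖ :=
        norm_integral_exp_smul_apply_le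
          (inner_sub_smul_adjoint_comp_self_apply_self_nonpos hA C hκ.le) _ ht hχt
    _ ≤ ‖C‖ * (√t * √(∫ s in 0..T, ‖χ s‖ ^ 2)) := by
        rw [adjoint.norm_map]
        gcongr
        exact intervalIntegral_norm_le_sqrt_mul_sqrt_integral_norm_sq ht htT hχ

/-- First-order bound for the noise-driven observer error term:
`‖ε(t)‖ ≤ κ‖C‖√t ‖χ‖_{L²(0,T;Y)}` where
`ε(t) = −κ ∫₀ᵗ e^{(A − κC*C)(t−s)} C* χ(s) ds`. -/
theorem noise_error_first_order_bound
    {X Y : Type*} [NormedAddCommGroup X] [InnerProductSpace ℝ X] [CompleteSpace X]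
    [NormedAddCommGroup Y] [InnerProductSpace ℝ Y] [CompleteSpace Y]
    (A : X →L[ℝ] X) (hA : ContinuousLinearMap.adjoint A = -A)
    (C : X →L[ℝ] Y) (κ T : ℝ) (hκ : 0 < κ) (hT : 0 < T)
    (χ : ℝ → Y) (hχ : MemLp χ 2 (volume.restrict (Ioc 0 T)))
    (ε : ℝ → X)
    (hε : ∀ t : ℝ, ε t = -(κ • ∫ s in (0:ℝ)..t,
      NormedSpace.exp ((t - s) • (A - κ • ((ContinuousLinearMap.adjoint C).comp C)))
        (ContinuousLinearMap.adjoint C (χ s)))) :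
    ∀ t ∈ Icc (0:ℝ) T,
      ‖ε t‖ ≤ κ * ‖C‖ * Real.sqrt t * Real.sqrt (∫ s in (0:ℝ)..T, ‖χ s‖ ^ 2) :=
  noise_error_first_order_bound_general A hA C κ T hκ χ hχ ε hε
end

section
/- Let X be a real Hilbert space and A : X → X a bounded linear operator with A + A* = −Q for a bounded operator Q. Then for every t ≥ 0, e^{tA} ∘ e^{tA*} = I − ∫₀ᵗ e^{sA} ∘ Q ∘ e^{sA*} ds, where the integral is a Bochner integral in the space of bounded operators on X. -/
/-!
Both sides agree at `t = 0`, and by the product rule the derivative of `s ↦ e^{sA} e^{sA*}` is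
`e^{sA} (A + A*) e^{sA*} = -e^{sA} Q e^{sA*}`; the identity is the fundamental theorem of calculus.
-/

open NormedSpace ContinuousLinearMap intervalIntegral

section BanachAlgebra

variable {𝔸 : Type*} [NormedRing 𝔸] [NormedAlgebra ℝ 𝔸] [CompleteSpace 𝔸]

theorem hasDerivAt_exp_smul_mul_exp_smul (a b : 𝔸) (s : ℝ) :
    HasDerivAt (fun u : ℝ => exp (u • a) * exp (u • b))
      (exp (s • a) * (a + b) * exp (s • b)) s := by
  refine ((hasDerivAt_exp_smul_const a s).mul (hasDerivAt_exp_smul_const' b s)).congr_deriv ?_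
  noncomm_ring

theorem continuous_exp_smul_mul_mul_exp_smul (a c b : 𝔸) :
    Continuous fun s : ℝ => exp (s • a) * c * exp (s • b) :=
  have continuous_exp_smul (x : 𝔸) : Continuous fun s : ℝ => exp (s • x) :=
    continuous_iff_continuousAt.2 fun s => (hasDerivAt_exp_smul_const x s).continuousAt
  ((continuous_exp_smul a).mul continuous_const).mul (continuous_exp_smul b)

theorem exp_smul_mul_exp_smul_sub_one_eq_integral (a b : 𝔸) (t : ℝ) :
    exp (t • a) * exp (t • b) - 1 = ∫ s in (0 : ℝ)..t, exp (s • a) * (a + b) * exp (s • b) := by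
  rw [integral_eq_sub_of_hasDerivAt (fun s _ => hasDerivAt_exp_smul_mul_exp_smul a b s)
    ((continuous_exp_smul_mul_mul_exp_smul a (a + b) b).intervalIntegrable 0 t)]
  simp only [zero_smul, exp_zero, mul_one]

end BanachAlgebra

/-- If `A + A* = -Q`, then `e^{tA} e^{tA*} = I − ∫₀ᵗ e^{sA} Q e^{sA*} ds` for `t ≥ 0`. -/
theorem exp_mul_exp_adjoint_eq_one_sub_integral
    {X : Type*} [NormedAddCommGroup X] [InnerProductSpace ℝ X] [CompleteSpace X]
    (A Q : X →L[ℝ] X)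
    (hAQ : A + ContinuousLinearMap.adjoint A = -Q) :
    ∀ t : ℝ, 0 ≤ t →
      (NormedSpace.exp (t • A)).comp (NormedSpace.exp (t • ContinuousLinearMap.adjoint A)) =
        1 - ∫ s in (0:ℝ)..t,
          ((NormedSpace.exp (s • A)).comp Q).comp (NormedSpace.exp (s • ContinuousLinearMap.adjoint A)) := by
  intro t _
  have h := exp_smul_mul_exp_smul_sub_one_eq_integral A (adjoint A) t
  rw [hAQ, sub_eq_iff_eq_add] at h
  simp only [mul_neg, neg_mul, integral_neg] at h
  change _ * _ = 1 - ∫ s in (0:ℝ)..t, _ * Q * _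
  rw [h, neg_add_eq_sub]
end

section
/- Let X be a real Hilbert space and A : X → X a bounded linear operator with A + A* = −Q where Q is a bounded positive semidefinite self-adjoint operator. Then for every t ≥ 0 the self-adjoint operator e^{tA} e^{tA*} satisfies e^{−‖Q‖t} I ≤ e^{tA} e^{tA*} ≤ I, i.e. both I − e^{tA} e^{tA*} and e^{tA} e^{tA*} − e^{−‖Q‖t} I are positive operators (⟨(I − e^{tA}e^{tA*})x, x⟩ ≥ 0 and ⟨(e^{tA}e^{tA*} − e^{−‖Q‖t}I)x, x⟩ ≥ 0 for all x ∈ X). -/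
open NormedSpace ContinuousLinearMap RealInnerProductSpace

/-!
Since `(e^{tA})* = e^{tA*}`, the quadratic form of `e^{tA} e^{tA*}` at `x` is `g t = ‖e^{tA*} x‖²`,
and `g' = 2⟪y, A* y⟫ = ⟪(A + A*) y, y⟫ = -⟪Q y, y⟫` along `y = e^{tA*} x`. Hence
`-‖Q‖ g ≤ g' ≤ 0`: `g` decreases, and `e^{‖Q‖t} g` increases.
-/

theorem exp_neg_mul_mul_le_of_hasDerivAt {g g' : ℝ → ℝ} {c t : ℝ}
    (hg : ∀ s, HasDerivAt g (g' s) s) (hg' : ∀ s, -c * g s ≤ g' s) (ht : 0 ≤ t) :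
    Real.exp (-c * t) * g 0 ≤ g t := by
  have hderiv : ∀ s, HasDerivAt (fun s => Real.exp (c * s) * g s)
      (Real.exp (c * s) * (c * g s + g' s)) s := fun s => by
    have h := ((hasDerivAt_id' s).const_mul c).exp.mul (hg s)
    simp only [mul_one] at h
    exact h.congr_deriv (by ring)
  have hmono : Monotone fun s => Real.exp (c * s) * g s :=
    monotone_of_hasDerivAt_nonneg hderiv fun s =>
      mul_nonneg (Real.exp_pos _).le (by linarith [hg' s])
  have h : Real.exp (c * 0) * g 0 ≤ Real.exp (c * t) * g t := hmono ht
  rw [mul_zero, Real.exp_zero, one_mul] at h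
  rw [neg_mul, Real.exp_neg, inv_mul_le_iff₀ (Real.exp_pos _)]
  exact h

theorem real_inner_apply_self_le_opNorm_mul_sq {E : Type*} [NormedAddCommGroup E]
    [InnerProductSpace ℝ E] (T : E →L[ℝ] E) (x : E) : ⟪T x, x⟫ ≤ ‖T‖ * ‖x‖ ^ 2 :=
  calc ⟪T x, x⟫ ≤ ‖T x‖ * ‖x‖ := real_inner_le_norm _ _
    _ ≤ ‖T‖ * ‖x‖ * ‖x‖ := by gcongr; exact T.le_opNorm x
    _ = ‖T‖ * ‖x‖ ^ 2 := by ring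

section CompleteSpace

variable {E : Type*} [NormedAddCommGroup E] [InnerProductSpace ℝ E] [CompleteSpace E]

theorem hasDerivAt_norm_sq_exp_smul_apply (B : E →L[ℝ] E) (x : E) (s : ℝ) :
    HasDerivAt (fun s : ℝ => ‖exp (s • B) x‖ ^ 2)
      (2 * ⟪exp (s • B) x, B (exp (s • B) x)⟫) s := by
  have h := ((hasDerivAt_exp_smul_const' B s).clm_apply (hasDerivAt_const s x)).norm_sq
  simpa using h

theorem inner_add_adjoint_apply_self (A : E →L[ℝ] E) (y : E) :
    ⟪(A + adjoint A) y, y⟫ = 2 * ⟪y, adjoint A y⟫ := by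
  rw [add_apply, inner_add_left, adjoint_inner_left, adjoint_inner_right, real_inner_comm (A y)]
  ring

theorem adjoint_exp_smul (A : E →L[ℝ] E) (t : ℝ) :
    adjoint (exp (t • A)) = exp (t • adjoint A) := by
  rw [← star_eq_adjoint, star_exp, star_smul, star_trivial, star_eq_adjoint]

theorem inner_exp_smul_comp_exp_smul_adjoint_apply_self (A : E →L[ℝ] E) (t : ℝ) (x : E) :
    ⟪(exp (t • A)).comp (exp (t • adjoint A)) x, x⟫ = ‖exp (t • adjoint A) x‖ ^ 2 := by
  rw [comp_apply, ← adjoint_inner_right, adjoint_exp_smul, real_inner_self_eq_norm_sq]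

end CompleteSpace

theorem exp_mul_exp_adjoint_operator_bounds_general
    {X : Type*} [NormedAddCommGroup X] [InnerProductSpace ℝ X] [CompleteSpace X]
    (A Q : X →L[ℝ] X)
    (hAQ : A + ContinuousLinearMap.adjoint A = -Q)
    (hQpos : ∀ x : X, 0 ≤ ⟪Q x, x⟫) :
    ∀ t : ℝ, 0 ≤ t → ∀ x : X,
      (0 ≤ ⟪((1 : X →L[ℝ] X) -
          (exp (t • A)).comp (exp (t • ContinuousLinearMap.adjoint A))) x, x⟫) ∧
      (0 ≤ ⟪((exp (t • A)).comp (exp (t • ContinuousLinearMap.adjoint A)) -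
          Real.exp (-‖Q‖ * t) • (1 : X →L[ℝ] X)) x, x⟫) := by
  intro t ht x
  set y : ℝ → X := fun s => exp (s • adjoint A) x
  have hderiv : ∀ s, HasDerivAt (fun s => ‖y s‖ ^ 2) (-⟪Q (y s), y s⟫) s := fun s => by
    convert hasDerivAt_norm_sq_exp_smul_apply (adjoint A) x s using 1
    rw [← inner_add_adjoint_apply_self, hAQ, neg_apply, inner_neg_left]
  have hy0 : ‖y 0‖ ^ 2 = ‖x‖ ^ 2 := by simp [y]
  simp only [sub_apply, one_apply_eq_self, smul_apply, inner_sub_left, real_inner_smul_left,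
    inner_exp_smul_comp_exp_smul_adjoint_apply_self, real_inner_self_eq_norm_sq, sub_nonneg]
  rw [← hy0]
  refine ⟨antitone_of_hasDerivAt_nonpos hderiv (fun s => neg_nonpos.2 (hQpos _)) ht,
    exp_neg_mul_mul_le_of_hasDerivAt hderiv (fun s => ?_) ht⟩
  linarith [real_inner_apply_self_le_opNorm_mul_sq Q (y s)]

/-- If `A + A* = -Q` with `Q ≥ 0`, then `e^{-‖Q‖t} I ≤ e^{tA} e^{tA*} ≤ I` for every
`t ≥ 0`, in the sense that both differences are positive operators. -/
theorem exp_mul_exp_adjoint_operator_bounds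
    {X : Type*} [NormedAddCommGroup X] [InnerProductSpace ℝ X] [CompleteSpace X]
    (A Q : X →L[ℝ] X)
    (hAQ : A + ContinuousLinearMap.adjoint A = -Q)
    (hQsa : ContinuousLinearMap.adjoint Q = Q)
    (hQpos : ∀ x : X, 0 ≤ ⟪Q x, x⟫) :
    ∀ t : ℝ, 0 ≤ t → ∀ x : X,
      (0 ≤ ⟪((1 : X →L[ℝ] X) -
          (exp (t • A)).comp (exp (t • ContinuousLinearMap.adjoint A))) x, x⟫) ∧
      (0 ≤ ⟪((exp (t • A)).comp (exp (t • ContinuousLinearMap.adjoint A)) -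
          Real.exp (-‖Q‖ * t) • (1 : X →L[ℝ] X)) x, x⟫) :=
  exp_mul_exp_adjoint_operator_bounds_general A Q hAQ hQpos
end

section
/- Let ε ≥ 0 and λ > ε²/4 be real numbers, set ω := √(λ − ε²/4), let A be the 2×2 real matrix with rows (0, 1) and (−λ, −ε), and let D := diag(λ, 1). Then for every t ≥ 0, exp(tA) · D⁻¹ · exp(tAᵀ) · D = e^{−εt} I + ε e^{−εt} N(t), where N(t) is the 2×2 matrix with entries N(t)₁₁ = (1/ω) sin(ωt) cos(ωt) + (ε/2)/ω² · sin²(ωt), N(t)₁₂ = −(1/ω²) sin²(ωt), N(t)₂₁ = −(λ/ω²) sin²(ωt), N(t)₂₂ = −(1/ω) sin(ωt) cos(ωt) + (ε/2)/ω² · sin²(ωt). -/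
/-!
Both `A` and its energy adjoint `A* = D⁻¹ Aᵀ D = [[0, -1], [λ, -ε]]` are `-(ε/2) I` plus a
traceless matrix, `B` resp. `B*`, whose square is `-ω² I`. Hence
`exp(tA) = e^{-εt/2} (cos ωt I + (sin ωt / ω) B)`, likewise for `A*`, and since `exp` commutes with
conjugation, `exp(tA) D⁻¹ exp(tAᵀ) D = exp(tA) exp(tA*)`.
Multiplying out with `B + B* = ε diag(1, -1)`, `B B* = (ω² + ε²/2) I - ε [[0, 1], [λ, 0]]` and
`sin² + cos² = 1` gives `e^{-εt} (I + ε N(t))`.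
-/

open Real Matrix

section TopologicalAlgebra

variable {𝔸 : Type*} [Ring 𝔸] [Algebra ℝ 𝔸] [TopologicalSpace 𝔸] [IsTopologicalRing 𝔸]
  [ContinuousSMul ℝ 𝔸] [T2Space 𝔸]

theorem exp_smul_one (c : ℝ) : NormedSpace.exp (c • (1 : 𝔸)) = Real.exp c • 1 := by
  rw [NormedSpace.exp_eq_tsum ℝ, Real.exp_eq_exp_ℝ]
  refine HasSum.tsum_eq ?_
  convert (NormedSpace.exp_series_hasSum_exp' (𝕂 := ℝ) c).smul_const (1 : 𝔸) using 2 with n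
  rw [smul_pow, one_pow, smul_smul, smul_eq_mul]

theorem exp_smul_eq_of_mul_self_eq_neg_sq {X : 𝔸} {ω : ℝ} (hω : ω ≠ 0)
    (hX : X * X = -(ω ^ 2) • 1) (t : ℝ) :
    NormedSpace.exp (t • X) = cos (ω * t) • 1 + (sin (ω * t) / ω) • X := by
  have heven (n : ℕ) : (t • X) ^ (2 * n) = ((-1 : ℝ) ^ n * (ω * t) ^ (2 * n)) • 1 := by
    rw [smul_pow, pow_mul X, sq, hX, smul_pow, one_pow, smul_smul]
    congr 1
    rw [neg_pow, mul_pow, pow_mul, pow_mul]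
    ring
  have hodd (n : ℕ) : (t • X) ^ (2 * n + 1) = ((-1 : ℝ) ^ n * (ω * t) ^ (2 * n) * t) • X := by
    rw [pow_succ, heven n, smul_mul_assoc, one_mul, smul_smul]
  rw [NormedSpace.exp_eq_tsum ℝ]
  refine (HasSum.even_add_odd ?_ ?_).tsum_eq
  · convert (hasSum_cos (ω * t)).smul_const (1 : 𝔸) using 2 with n
    rw [heven n, smul_smul]
    field_simp
  · convert ((hasSum_sin (ω * t)).div_const ω).smul_const X using 2 with n
    rw [hodd n, smul_smul]
    congr 1
    field_simp
    ring

end TopologicalAlgebra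

namespace Matrix

theorem exp_smul_eq_of_sub_mul_self {m : Type*} [Fintype m] [DecidableEq m]
    {A : Matrix m m ℝ} {c ω : ℝ} (hω : ω ≠ 0)
    (hA : (A - c • 1) * (A - c • 1) = -(ω ^ 2) • 1) (t : ℝ) :
    NormedSpace.exp (t • A) =
      Real.exp (c * t) • (cos (ω * t) • 1 + (sin (ω * t) / ω) • (A - c • 1)) := by
  have hsplit : t • A = (c * t) • (1 : Matrix m m ℝ) + t • (A - c • 1) := by
    rw [smul_sub, smul_smul, mul_comm]
    abel
  have hcomm : Commute ((c * t) • (1 : Matrix m m ℝ)) (t • (A - c • 1)) :=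
    (Commute.one_left _).smul_left _
  rw [hsplit, exp_add_of_commute _ _ hcomm, exp_smul_one, smul_mul_assoc, one_mul,
    exp_smul_eq_of_mul_self_eq_neg_sq hω hA]

theorem fin_two_traceless_mul_self {R : Type*} [CommRing R] (a b c : R) :
    !![a, b; c, -a] * !![a, b; c, -a] = (a ^ 2 + b * c) • (1 : Matrix (Fin 2) (Fin 2) R) := by
  rw [mul_fin_two]
  ext i j
  fin_cases i <;> fin_cases j <;> simp <;> ring

end Matrix

theorem exp_smul_damped_oscillator {ε b d ω : ℝ} (hω : ω ≠ 0)
    (hω2 : ω ^ 2 = -(b * d) - ε ^ 2 / 4) (t : ℝ) :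
    NormedSpace.exp (t • !![0, b; d, -ε]) =
      Real.exp (-(ε / 2) * t) •
        (cos (ω * t) • 1 + (sin (ω * t) / ω) • !![ε / 2, b; d, -(ε / 2)]) := by
  have hshift : !![0, b; d, -ε] - (-(ε / 2)) • 1 = !![ε / 2, b; d, -(ε / 2)] := by
    rw [one_fin_two]
    ext i j
    fin_cases i <;> fin_cases j <;> simp [neg_add_eq_sub, half_sub]
  have hsq : !![ε / 2, b; d, -(ε / 2)] * !![ε / 2, b; d, -(ε / 2)] = -(ω ^ 2) • 1 := by
    rw [fin_two_traceless_mul_self, hω2]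
    congr 1
    ring
  rw [exp_smul_eq_of_sub_mul_self hω (hshift ▸ hsq), hshift]

theorem damped_wave_energy_adjoint {ε lam : ℝ} (hlam : lam ≠ 0) :
    !![lam, 0; 0, 1]⁻¹ * !![0, 1; -lam, -ε]ᵀ * !![lam, 0; 0, 1] = !![0, -1; lam, -ε] := by
  have hinv : !![lam, 0; 0, 1]⁻¹ = !![lam⁻¹, 0; 0, 1] := by
    refine inv_eq_left_inv ?_
    rw [mul_fin_two, inv_mul_cancel₀ hlam, one_fin_two]
    simp
  have htr : !![0, 1; -lam, -ε]ᵀ = !![0, -lam; 1, -ε] := by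
    ext i j
    fin_cases i <;> fin_cases j <;> rfl
  rw [hinv, htr, mul_fin_two, mul_fin_two]
  simp [hlam]

theorem damped_wave_rotation_mul_rotation_adjoint (ε lam ω s co : ℝ) (hω : ω ≠ 0)
    (hω2 : ω ^ 2 = lam - ε ^ 2 / 4) (hsc : s ^ 2 + co ^ 2 = 1) :
    (co • (1 : Matrix (Fin 2) (Fin 2) ℝ) + (s / ω) • !![ε / 2, 1; -lam, -(ε / 2)]) *
        (co • 1 + (s / ω) • !![ε / 2, -1; lam, -(ε / 2)]) =
      1 + ε • !![(1 / ω) * s * co + (ε / 2) / ω ^ 2 * s ^ 2, -(1 / ω ^ 2) * s ^ 2;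
        -(lam / ω ^ 2) * s ^ 2, -(1 / ω) * s * co + (ε / 2) / ω ^ 2 * s ^ 2] := by
  ext i j
  fin_cases i <;> fin_cases j <;>
    simp [mul_apply, Fin.sum_univ_two, one_apply] <;> field_simp
  · linear_combination (4 * ω ^ 2) * hsc - (4 * s ^ 2) * hω2
  · ring
  · ring
  · linear_combination (4 * ω ^ 2) * hsc - (4 * s ^ 2) * hω2

theorem damped_wave_mode_exp_mul_exp_adjoint_general
    (ε lam : ℝ) (hlam : ε ^ 2 / 4 < lam)
    (ω : ℝ) (hω : ω = Real.sqrt (lam - ε ^ 2 / 4))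
    (A D : Matrix (Fin 2) (Fin 2) ℝ)
    (hA : A = !![0, 1; -lam, -ε]) (hD : D = !![lam, 0; 0, 1]) :
    ∀ t : ℝ, 0 ≤ t →
      NormedSpace.exp (t • A) * D⁻¹ * NormedSpace.exp (t • Aᵀ) * D =
        Real.exp (-ε * t) • (1 : Matrix (Fin 2) (Fin 2) ℝ) +
          (ε * Real.exp (-ε * t)) •
            !![(1 / ω) * Real.sin (ω * t) * Real.cos (ω * t) +
                  (ε / 2) / ω ^ 2 * Real.sin (ω * t) ^ 2,
                -(1 / ω ^ 2) * Real.sin (ω * t) ^ 2;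
              -(lam / ω ^ 2) * Real.sin (ω * t) ^ 2,
                -(1 / ω) * Real.sin (ω * t) * Real.cos (ω * t) +
                  (ε / 2) / ω ^ 2 * Real.sin (ω * t) ^ 2] := by
  intro t _
  have hω2 : ω ^ 2 = lam - ε ^ 2 / 4 := by rw [hω, sq_sqrt (by linarith)]
  have hω0 : ω ≠ 0 := by rw [hω]; exact (sqrt_pos.2 (by linarith)).ne'
  have hlam0 : lam ≠ 0 := by nlinarith
  have hDunit : IsUnit D := by
    rw [isUnit_iff_isUnit_det, hD, det_fin_two_of]
    simpa using hlam0
  calc NormedSpace.exp (t • A) * D⁻¹ * NormedSpace.exp (t • Aᵀ) * D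
      = NormedSpace.exp (t • A) * NormedSpace.exp (t • (D⁻¹ * Aᵀ * D)) := by
        rw [← Matrix.smul_mul, ← Matrix.mul_smul, exp_conj' _ _ hDunit, mul_assoc, mul_assoc,
          mul_assoc]
    _ = _ := by
        rw [hD, hA, damped_wave_energy_adjoint hlam0,
          exp_smul_damped_oscillator hω0 (by linarith),
          exp_smul_damped_oscillator hω0 (by linarith), smul_mul_smul_comm,
          damped_wave_rotation_mul_rotation_adjoint ε lam ω _ _ hω0 hω2 (sin_sq_add_cos_sq _),
          ← Real.exp_add, show -(ε / 2) * t + -(ε / 2) * t = -ε * t by ring, smul_add, smul_smul,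
          mul_comm (Real.exp _) ε]

/-- For one eigenmode of the damped wave equation, with `A = [[0, 1], [−λ, −ε]]`,
`ω = √(λ − ε²/4)` and the energy weight `D = diag(λ, 1)`, the operator
`e^{At} e^{A*t}` (adjoint with respect to the energy inner product, represented by
`exp(tA) D⁻¹ exp(tAᵀ) D`) equals `e^{−εt} I + ε e^{−εt} N(t)` with the explicit
matrix `N(t)` below. -/
theorem damped_wave_mode_exp_mul_exp_adjoint
    (ε lam : ℝ) (hε : 0 ≤ ε) (hlam : ε ^ 2 / 4 < lam)
    (ω : ℝ) (hω : ω = Real.sqrt (lam - ε ^ 2 / 4))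
    (A D : Matrix (Fin 2) (Fin 2) ℝ)
    (hA : A = !![0, 1; -lam, -ε]) (hD : D = !![lam, 0; 0, 1]) :
    ∀ t : ℝ, 0 ≤ t →
      NormedSpace.exp (t • A) * D⁻¹ * NormedSpace.exp (t • Aᵀ) * D =
        Real.exp (-ε * t) • (1 : Matrix (Fin 2) (Fin 2) ℝ) +
          (ε * Real.exp (-ε * t)) •
            !![(1 / ω) * Real.sin (ω * t) * Real.cos (ω * t) +
                  (ε / 2) / ω ^ 2 * Real.sin (ω * t) ^ 2,
                -(1 / ω ^ 2) * Real.sin (ω * t) ^ 2;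
              -(lam / ω ^ 2) * Real.sin (ω * t) ^ 2,
                -(1 / ω) * Real.sin (ω * t) * Real.cos (ω * t) +
                  (ε / 2) / ω ^ 2 * Real.sin (ω * t) ^ 2] :=
  damped_wave_mode_exp_mul_exp_adjoint_general ε lam hlam ω hω A D hA hD
end
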